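/- arXiv:1610.02175 — 3 statements merged into one kernel-verified Lean document; each statement's English description precedes it below -/
import Mathlib

section
/- Let G be a finite simple graph and T(G) its total graph, whose vertices are V(G) ∪ E(G), two being adjacent iff they are adjacent or incident in G. Then F(T(G)) = 8·F(G) + ξ₄(G) + 3·ReZG₃(G). -/
/-! A vertex `u` of `T(G)` is adjacent to its `d(u)` neighbours and its `d(u)` incident edges,
so it has degree `2 d(u)`. An edge `uv` is adjacent to its two endpoints and to the
`d(u) + d(v) - 2` other edges meeting it (only `uv` itself contains both `u` and `v`), so it has
degree `d(u) + d(v)`. Hence `F(T(G)) = 8 F(G) + Σ_{uv ∈ E} (d(u) + d(v))³`; expanding the cube,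
the pure terms `Σ_{uv ∈ E} (d(u)³ + d(v)³)` regroup by vertex into `Σ_v d(v)⁴` and the mixed
terms give `3 ReZG₃(G)`. -/


open SimpleGraph Finset
open scoped Classical

noncomputable section
namespace Paper

variable {V : Type*} [Fintype V]

/-- Degree as an integer. -/
def d (G : SimpleGraph V) (v : V) : ℤ := G.degree v

/-- Number of edges. -/
def m (G : SimpleGraph V) : ℤ := G.edgeFinset.card

/-- Sum over unordered edges of a symmetric vertex-pair function. -/
def edgeSum (G : SimpleGraph V) (f : V → V → ℤ) (hf : ∀ u v, f u v = f v u) : ℤ :=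
  ∑ e ∈ G.edgeFinset, Sym2.lift ⟨f, hf⟩ e

/-- First Zagreb index. -/
def M1 (G : SimpleGraph V) : ℤ := ∑ v, d G v ^ 2

/-- Second Zagreb index. -/
def M2 (G : SimpleGraph V) : ℤ :=
  edgeSum G (fun u v => d G u * d G v) (by intros; ring)

/-- F-index. -/
def F (G : SimpleGraph V) : ℤ := ∑ v, d G v ^ 3

/-- ξ₄. -/
def xi4 (G : SimpleGraph V) : ℤ := ∑ v, d G v ^ 4

/-- Redefined third Zagreb index. -/
def ReZG3 (G : SimpleGraph V) : ℤ :=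
  edgeSum G (fun u v => d G u * d G v * (d G u + d G v)) (by intros; ring)

/-- F-coindex: sum over edges of the complement with degrees in G. -/
def Fbar (G : SimpleGraph V) : ℤ :=
  edgeSum Gᶜ (fun u v => d G u ^ 2 + d G v ^ 2) (by intros; ring)

/-- Subdivision graph. -/
def subdivision (G : SimpleGraph V) : SimpleGraph (V ⊕ G.edgeSet) where
  Adj x y :=
    match x, y with
    | Sum.inl u, Sum.inr e => u ∈ (e : Sym2 V)
    | Sum.inr e, Sum.inl u => u ∈ (e : Sym2 V)
    | _, _ => False
  symm := by constructor; rintro (u | e) (v | f) h <;> first | exact h | exact h.elim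
  loopless := by constructor; rintro (u | e) <;> simp

/-- Vertex-semitotal graph. -/
def vertexSemitotal (G : SimpleGraph V) : SimpleGraph (V ⊕ G.edgeSet) where
  Adj x y :=
    match x, y with
    | Sum.inl u, Sum.inl v => G.Adj u v
    | Sum.inl u, Sum.inr e => u ∈ (e : Sym2 V)
    | Sum.inr e, Sum.inl u => u ∈ (e : Sym2 V)
    | _, _ => False
  symm := by
    constructor
    rintro (u | e) (v | f) h
    · exact G.adj_symm h
    · exact h
    · exact h
    · exact h.elim
  loopless := by
    constructor
    rintro (u | e) h
    · exact G.irrefl h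
    · exact h

/-- Edge-semitotal graph. -/
def edgeSemitotal (G : SimpleGraph V) : SimpleGraph (V ⊕ G.edgeSet) where
  Adj x y :=
    match x, y with
    | Sum.inl u, Sum.inr e => u ∈ (e : Sym2 V)
    | Sum.inr e, Sum.inl u => u ∈ (e : Sym2 V)
    | Sum.inr e, Sum.inr f => e ≠ f ∧ ∃ v, v ∈ (e : Sym2 V) ∧ v ∈ (f : Sym2 V)
    | _, _ => False
  symm := by
    constructor
    rintro (u | e) (v | f) h
    · exact h.elim
    · exact h
    · exact h
    · obtain ⟨hne, w, h1, h2⟩ := h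
      exact ⟨hne.symm, w, h2, h1⟩
  loopless := by
    constructor
    rintro (u | e) h
    · exact h
    · exact h.1 rfl

/-- Total graph. -/
def total (G : SimpleGraph V) : SimpleGraph (V ⊕ G.edgeSet) where
  Adj x y :=
    match x, y with
    | Sum.inl u, Sum.inl v => G.Adj u v
    | Sum.inl u, Sum.inr e => u ∈ (e : Sym2 V)
    | Sum.inr e, Sum.inl u => u ∈ (e : Sym2 V)
    | Sum.inr e, Sum.inr f => e ≠ f ∧ ∃ v, v ∈ (e : Sym2 V) ∧ v ∈ (f : Sym2 V)
  symm := by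
    constructor
    rintro (u | e) (v | f) h
    · exact G.adj_symm h
    · exact h
    · exact h
    · obtain ⟨hne, w, h1, h2⟩ := h
      exact ⟨hne.symm, w, h2, h1⟩
  loopless := by
    constructor
    rintro (u | e) h
    · exact G.irrefl h
    · exact h.1 rfl

/-- Paraline graph: line graph of the subdivision graph. -/
def paraline (G : SimpleGraph V) : SimpleGraph (subdivision G).edgeSet :=
  (subdivision G).lineGraph

lemma degree_eq_card_adj_inl_add_card_adj_inr {α β : Type*} [Fintype α] [Fintype β]
    (H : SimpleGraph (α ⊕ β)) (x : α ⊕ β) :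
    H.degree x = #{a | H.Adj x (.inl a)} + #{b | H.Adj x (.inr b)} := by
  rw [← card_neighborFinset_eq_degree, neighborFinset_eq_filter, card_filter, card_filter,
    card_filter, Fintype.sum_sum_type]

section Edges

variable {V : Type*} [Fintype V] (G : SimpleGraph V)

lemma card_filter_edgeSet (p : Sym2 V → Prop) [DecidablePred p] :
    #{e : G.edgeSet | p e} = #{e ∈ G.edgeFinset | p e} := by
  rw [card_filter, card_filter]
  exact sum_set_coe (f := fun e => if p e then 1 else 0) _

lemma sum_edgeSet (g : Sym2 V → ℤ) : ∑ e : G.edgeSet, g e = ∑ e ∈ G.edgeFinset, g e :=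
  sum_set_coe _

lemma lineGraph_degree_add_two {u v : V} (h : G.Adj u v) :
    G.lineGraph.degree ⟨s(u, v), h⟩ + 2 = G.degree u + G.degree v := by
  have hnbr : G.lineGraph.degree ⟨s(u, v), h⟩
      = #{f ∈ G.edgeFinset | s(u, v) ≠ f ∧ ∃ w, w ∈ s(u, v) ∧ w ∈ f} := by
    rw [← card_neighborFinset_eq_degree, neighborFinset_eq_filter]
    simp only [lineGraph_adj_iff_exists, ne_eq, Subtype.ext_iff]
    exact card_filter_edgeSet G (fun f => ¬s(u, v) = f ∧ ∃ w ∈ s(u, v), w ∈ f)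
  have hsplit : {f ∈ G.edgeFinset | s(u, v) ≠ f ∧ ∃ w, w ∈ s(u, v) ∧ w ∈ f}
      = (G.incidenceFinset u ∪ G.incidenceFinset v).erase s(u, v) := by
    ext f
    simp only [incidenceFinset_eq_filter, mem_erase, mem_union, mem_filter, Sym2.mem_iff,
      exists_eq_or_imp, exists_eq_left]
    tauto
  have hinter : G.incidenceFinset u ∩ G.incidenceFinset v = {s(u, v)} := by
    rw [← coe_inj, coe_inter, coe_incidenceFinset, coe_incidenceFinset, coe_singleton,
      G.incidenceSet_inter_incidenceSet_of_adj h]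
  have hmem : s(u, v) ∈ G.incidenceFinset u ∪ G.incidenceFinset v := by
    simp [h]
  rw [hnbr, hsplit, card_erase_of_mem hmem, ← card_incidenceFinset_eq_degree,
    ← card_incidenceFinset_eq_degree, ← card_union_add_card_inter, hinter, card_singleton]
  have := card_pos.2 ⟨_, hmem⟩
  omega

end Edges

section EdgeSum

variable {V : Type*} [Fintype V] (G : SimpleGraph V)

lemma edgeSum_add_const_mul (f g : V → V → ℤ) (hf : ∀ u v, f u v = f v u)
    (hg : ∀ u v, g u v = g v u) (c : ℤ) :
    edgeSum G (fun u v => f u v + c * g u v) (fun u v => by rw [hf, hg])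
      = edgeSum G f hf + c * edgeSum G g hg := by
  rw [edgeSum, edgeSum, edgeSum, mul_sum, ← sum_add_distrib]
  refine sum_congr rfl fun e _ => ?_
  induction e using Sym2.ind with
  | _ u v => rfl

lemma sum_edgeFinset_sum_toFinset (f : V → ℤ) :
    ∑ e ∈ G.edgeFinset, ∑ w ∈ e.toFinset, f w = ∑ v, d G v * f v := by
  rw [sum_comm' (t' := univ) (s' := fun v => G.incidenceFinset v) (fun e w => by
    simp [incidenceSet, Sym2.mem_toFinset])]
  simp only [sum_const, card_incidenceFinset_eq_degree, nsmul_eq_mul, d]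

lemma edgeSum_add_eq_sum_degree_mul (f : V → ℤ) :
    edgeSum G (fun u v => f u + f v) (fun _ _ => add_comm _ _) = ∑ v, d G v * f v := by
  rw [edgeSum, ← sum_edgeFinset_sum_toFinset]
  refine sum_congr rfl fun e he => ?_
  induction e using Sym2.ind with
  | _ u v => rw [Sym2.lift_mk, Sym2.toFinset_mk_eq, sum_pair (G.ne_of_adj (mem_edgeFinset.1 he))]

end EdgeSum

section TotalGraph

variable {V : Type*} (G : SimpleGraph V)

@[simp] lemma total_adj_inl_inl {u v : V} : (total G).Adj (.inl u) (.inl v) ↔ G.Adj u v :=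
  .rfl

@[simp] lemma total_adj_inl_inr {u : V} {e : G.edgeSet} :
    (total G).Adj (.inl u) (.inr e) ↔ u ∈ (e : Sym2 V) := .rfl

@[simp] lemma total_adj_inr_inl {e : G.edgeSet} {u : V} :
    (total G).Adj (.inr e) (.inl u) ↔ u ∈ (e : Sym2 V) := .rfl

@[simp] lemma total_adj_inr_inr {e f : G.edgeSet} :
    (total G).Adj (.inr e) (.inr f) ↔ G.lineGraph.Adj e f :=
  lineGraph_adj_iff_exists.symm

variable [Fintype V]

lemma total_degree_inl (u : V) : (total G).degree (.inl u) = 2 * G.degree u := by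
  rw [degree_eq_card_adj_inl_add_card_adj_inr, two_mul]
  simp only [total_adj_inl_inl, total_adj_inl_inr]
  rw [← neighborFinset_eq_filter, card_neighborFinset_eq_degree, card_filter_edgeSet G (u ∈ ·),
    ← incidenceFinset_eq_filter, card_incidenceFinset_eq_degree]

lemma total_degree_inr {u v : V} (h : G.Adj u v) :
    (total G).degree (.inr ⟨s(u, v), h⟩) = G.degree u + G.degree v := by
  rw [degree_eq_card_adj_inl_add_card_adj_inr, ← lineGraph_degree_add_two G h, add_comm]
  simp only [total_adj_inr_inl, total_adj_inr_inr]
  have hends : ({w | w ∈ s(u, v)} : Finset V) = {u, v} := by ext; simp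
  rw [← neighborFinset_eq_filter, card_neighborFinset_eq_degree, hends, card_pair h.ne]

lemma sum_total_degree_inr_pow (n : ℕ) :
    ∑ e : G.edgeSet, d (total G) (.inr e) ^ n
      = edgeSum G (fun u v => (d G u + d G v) ^ n) (fun _ _ => by rw [add_comm]) := by
  rw [edgeSum, ← sum_edgeSet]
  refine sum_congr rfl fun ⟨e, he⟩ _ => ?_
  induction e using Sym2.ind with
  | _ u v => simp only [d, total_degree_inr G he, Nat.cast_add, Sym2.lift_mk]

end TotalGraph

theorem stmt6 {V : Type*} [Fintype V] (G : SimpleGraph V) :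
    F (total G) = 8 * F G + xi4 G + 3 * ReZG3 G := by
  have hvertices : ∀ u, d (total G) (.inl u) ^ 3 = 8 * d G u ^ 3 := fun u => by
    simp only [d, total_degree_inl, Nat.cast_mul, Nat.cast_ofNat]
    ring
  have hedges : edgeSum G (fun u v => (d G u + d G v) ^ 3) (fun _ _ => by rw [add_comm])
      = xi4 G + 3 * ReZG3 G := by
    have hxi4 : xi4 G = ∑ v, d G v * d G v ^ 3 := sum_congr rfl fun v _ => by ring
    rw [hxi4, ReZG3, ← edgeSum_add_eq_sum_degree_mul G (fun v => d G v ^ 3),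
      ← edgeSum_add_const_mul]
    congr 1
    funext u v
    ring
  rw [F, Fintype.sum_sum_type, sum_congr rfl fun u _ => hvertices u, ← mul_sum,
    sum_total_degree_inr_pow, hedges, F, add_assoc]

end Paper
end
end

section
/- Let G be a finite simple graph with n vertices and m edges. The F-coindex of the total graph satisfies F̄(T(G)) = (m+n-9)·F(G) + 4(m+n-1)·M₁(G) + 2(m+n-1)·M₂(G) - ξ₄(G) - 3·ReZG₃(G). -/
/-!
A vertex of degree `d` lies on `N - 1 - d` edges of the complement of a graph on `N` vertices,
so `F̄(H) = (N - 1) M₁(H) - F(H)` for every graph `H`. In `T(G)` the vertex `v` has degree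
`2 d(v)` and the edge `uv` has degree `d(u) + d(v)`: its two ends, plus the `d(u) + d(v) - 2`
other edges meeting it. Expanding `(d(u) + d(v))²` and `(d(u) + d(v))³` and summing over edges
with `∑_{uv ∈ E} (g(u) + g(v)) = ∑_v d(v) g(v)` gives `M₁(T(G)) = 4 M₁ + F + 2 M₂` and
`F(T(G)) = 8 F + ξ₄ + 3 ReZG₃`; with `N = n + m` the identity follows.
-/

open SimpleGraph Finset
open scoped Classical

noncomputable section
namespace Paper

variable {V : Type*} [Fintype V]

section EdgeSums

variable {M : Type*} [AddCommMonoid M]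

theorem sum_edgeFinset_sum_mem_eq_sum_degree_smul (G : SimpleGraph V) (g : V → M) :
    ∑ e ∈ G.edgeFinset, ∑ v with v ∈ e, g v = ∑ v, G.degree v • g v := by
  rw [Finset.sum_comm' (t' := univ) (s' := fun v ↦ G.incidenceFinset v)]
  · simp only [sum_const, card_incidenceFinset_eq_degree]
  · intro e v
    simp [incidenceSet, and_comm]

theorem sum_edgeFinset_lift_add_eq_sum_degree_smul (G : SimpleGraph V) (g : V → M) :
    ∑ e ∈ G.edgeFinset, Sym2.lift ⟨fun u v ↦ g u + g v, fun _ _ ↦ add_comm _ _⟩ e =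
      ∑ v, G.degree v • g v := by
  rw [← sum_edgeFinset_sum_mem_eq_sum_degree_smul]
  refine sum_congr rfl fun e he ↦ ?_
  induction e with
  | _ u v =>
    have huv : u ≠ v := G.ne_of_adj (G.mem_edgeFinset.1 he)
    have : ({w | w ∈ s(u, v)} : Finset V) = {u, v} := by ext; simp
    rw [Sym2.lift_mk, this, sum_pair huv]

end EdgeSums

theorem edgeSum_eq_sum_d_mul (G : SimpleGraph V) (f : V → V → ℤ) (hf : ∀ u v, f u v = f v u)
    (g : V → ℤ) (hfg : ∀ u v, f u v = g u + g v) :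
    edgeSum G f hf = ∑ v, d G v * g v := by
  have : f = fun u v ↦ g u + g v := funext₂ hfg
  subst this
  simp [edgeSum, sum_edgeFinset_lift_add_eq_sum_degree_smul, d]

theorem edgeSum_add_mul (G : SimpleGraph V) (f g h : V → V → ℤ) (hf : ∀ u v, f u v = f v u)
    (hg : ∀ u v, g u v = g v u) (hh : ∀ u v, h u v = h v u) (c : ℤ)
    (hfgh : ∀ u v, h u v = f u v + c * g u v) :
    edgeSum G h hh = edgeSum G f hf + c * edgeSum G g hg := by
  rw [edgeSum, edgeSum, edgeSum, mul_sum, ← sum_add_distrib]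
  refine sum_congr rfl fun e _ ↦ ?_
  induction e with
  | _ u v => exact hfgh u v

theorem d_compl (H : SimpleGraph V) (v : V) : d Hᶜ v = Fintype.card V - 1 - d H v := by
  have := H.degree_lt_card_verts v
  rw [d, d, degree_compl]
  omega

theorem Fbar_eq_M1_sub_F (H : SimpleGraph V) : Fbar H = (Fintype.card V - 1) * M1 H - F H := by
  rw [Fbar, edgeSum_eq_sum_d_mul Hᶜ _ _ (fun v ↦ d H v ^ 2) fun _ _ ↦ rfl, M1, F, mul_sum,
    ← sum_sub_distrib]
  exact sum_congr rfl fun v _ ↦ by rw [d_compl]; ring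

theorem degree_lineGraph_add_two (G : SimpleGraph V) {u v : V} (h : G.Adj u v) :
    G.lineGraph.degree ⟨s(u, v), h⟩ + 2 = G.degree u + G.degree v := by
  set e : G.edgeSet := ⟨s(u, v), h⟩
  have hmem : s(u, v) ∈ G.incidenceFinset u ∪ G.incidenceFinset v := by
    simp [incidenceSet, h]
  have hmap : (G.lineGraph.neighborFinset e).map (Function.Embedding.subtype _) =
      (G.incidenceFinset u ∪ G.incidenceFinset v).erase s(u, v) := by
    ext f
    simp only [mem_map, mem_neighborFinset, lineGraph_adj_iff_exists,
      Function.Embedding.subtype_apply, mem_erase, mem_union, mem_incidenceFinset, incidenceSet]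
    constructor
    · rintro ⟨f, ⟨hne, w, hw, hwf⟩, rfl⟩
      refine ⟨fun hf ↦ hne (Subtype.ext hf.symm), ?_⟩
      rcases Sym2.mem_iff.1 hw with rfl | rfl
      exacts [Or.inl ⟨f.2, hwf⟩, Or.inr ⟨f.2, hwf⟩]
    · rintro ⟨hne, hf⟩
      refine ⟨⟨f, hf.elim And.left And.left⟩,
        ⟨fun h' ↦ hne (congrArg Subtype.val h').symm, ?_⟩, rfl⟩
      rcases hf with ⟨-, hu⟩ | ⟨-, hv⟩
      exacts [⟨u, Sym2.mem_mk_left _ _, hu⟩, ⟨v, Sym2.mem_mk_right _ _, hv⟩]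
  have hinter : G.incidenceFinset u ∩ G.incidenceFinset v = {s(u, v)} := by
    rw [← coe_inj, coe_inter, coe_incidenceFinset, coe_incidenceFinset, coe_singleton,
      G.incidenceSet_inter_incidenceSet_of_adj h]
  have hunion := card_union_add_card_inter (G.incidenceFinset u) (G.incidenceFinset v)
  rw [hinter, card_singleton] at hunion
  rw [← card_neighborFinset_eq_degree, ← card_map (Function.Embedding.subtype _), hmap,
    card_erase_of_mem hmem, ← card_incidenceFinset_eq_degree, ← card_incidenceFinset_eq_degree]
  have := card_pos.2 ⟨_, hmem⟩
  omega

theorem degree_total_inl (G : SimpleGraph V) (v : V) :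
    (total G).degree (Sum.inl v) = 2 * G.degree v := by
  rw [two_mul]
  nth_rw 2 [← G.card_incidenceSet_eq_degree v]
  rw [← card_neighborSet_eq_degree, ← card_neighborSet_eq_degree, ← Fintype.card_sum]
  exact Fintype.card_congr <| Equiv.subtypeSum.trans <|
    Equiv.sumCongr (Equiv.subtypeEquivRight fun _ ↦ Iff.rfl)
      (Equiv.subtypeSubtypeEquivSubtypeInter (· ∈ G.edgeSet) (v ∈ ·))

theorem degree_total_inr (G : SimpleGraph V) {u v : V} (h : G.Adj u v) :
    (total G).degree (Sum.inr ⟨s(u, v), h⟩) = G.degree u + G.degree v := by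
  rw [← degree_lineGraph_add_two G h, ← card_neighborSet_eq_degree, ← card_neighborSet_eq_degree,
    add_comm]
  have hends : Fintype.card {w // w ∈ s(u, v)} = 2 := by
    rw [Fintype.card_subtype, ← card_pair h.ne]
    congr 1
    ext
    simp
  rw [← hends, ← Fintype.card_sum]
  exact Fintype.card_congr <| Equiv.subtypeSum.trans <|
    Equiv.sumCongr (Equiv.refl _) (Equiv.subtypeEquivRight fun _ ↦ lineGraph_adj_iff_exists.symm)

theorem d_total_inl (G : SimpleGraph V) (v : V) : d (total G) (Sum.inl v) = 2 * d G v := by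
  simp [d, degree_total_inl]

theorem d_total_inr (G : SimpleGraph V) {u v : V} (h : G.Adj u v) :
    d (total G) (Sum.inr ⟨s(u, v), h⟩) = d G u + d G v := by
  simp [d, degree_total_inr]

theorem sum_d_total_pow (G : SimpleGraph V) (k : ℕ) :
    ∑ x, d (total G) x ^ k =
      2 ^ k * ∑ v, d G v ^ k + edgeSum G (fun u v ↦ (d G u + d G v) ^ k) fun _ _ ↦ by ring := by
  rw [Fintype.sum_sum_type, edgeSum, mul_sum, sum_subtype G.edgeFinset fun _ ↦ mem_edgeFinset]
  congr 1
  · exact sum_congr rfl fun v _ ↦ by rw [d_total_inl, mul_pow]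
  · refine sum_congr rfl fun ⟨e, he⟩ _ ↦ ?_
    induction e with
    | _ u v => rw [d_total_inr G he, Sym2.lift_mk]

theorem card_total (G : SimpleGraph V) :
    (Fintype.card (V ⊕ G.edgeSet) : ℤ) = Fintype.card V + m G := by
  rw [Fintype.card_sum, m, edgeFinset_card, Nat.cast_add]

theorem M1_total (G : SimpleGraph V) : M1 (total G) = 4 * M1 G + F G + 2 * M2 G := by
  rw [M1, sum_d_total_pow, edgeSum_add_mul G (fun u v ↦ d G u ^ 2 + d G v ^ 2)
      (fun u v ↦ d G u * d G v) _ (fun _ _ ↦ by ring) (fun _ _ ↦ by ring) _ 2 fun _ _ ↦ by ring,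
    edgeSum_eq_sum_d_mul G _ _ (fun v ↦ d G v ^ 2) fun _ _ ↦ rfl]
  have hF : ∑ v, d G v * d G v ^ 2 = F G := sum_congr rfl fun _ _ ↦ by ring
  rw [hF, M1, M2]
  ring

theorem F_total (G : SimpleGraph V) : F (total G) = 8 * F G + xi4 G + 3 * ReZG3 G := by
  rw [F, sum_d_total_pow, edgeSum_add_mul G (fun u v ↦ d G u ^ 3 + d G v ^ 3)
      (fun u v ↦ d G u * d G v * (d G u + d G v)) _ (fun _ _ ↦ by ring) (fun _ _ ↦ by ring) _ 3
      fun _ _ ↦ by ring,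
    edgeSum_eq_sum_d_mul G _ _ (fun v ↦ d G v ^ 3) fun _ _ ↦ rfl]
  have hxi4 : ∑ v, d G v * d G v ^ 3 = xi4 G := sum_congr rfl fun _ _ ↦ by ring
  rw [hxi4, F, ReZG3]
  ring

theorem stmt14 {V : Type*} [Fintype V] (G : SimpleGraph V) :
    Fbar (total G) =
      (m G + (Fintype.card V : ℤ) - 9) * F G + 4 * (m G + (Fintype.card V : ℤ) - 1) * M1 G +
        2 * (m G + (Fintype.card V : ℤ) - 1) * M2 G - xi4 G - 3 * ReZG3 G := by
  rw [Fbar_eq_M1_sub_F, card_total, M1_total, F_total]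
  ring

end Paper
end
end

section
/- Let G be a finite simple graph with m edges. The F-coindex of the paraline graph satisfies F̄(PL(G)) = (2m-1)·F(G) - ξ₄(G). -/
open SimpleGraph Finset
open scoped Classical

noncomputable section
namespace Paper

variable {V : Type*} [Fintype V]

/-!
Counting non-adjacent pairs through complement degrees gives
`F̄(H) = ∑ᵥ (N - 1 - d_H(v)) d_H(v)²` for any graph `H` on `N` vertices. The vertices of
`PL(G) = L(S(G))` are the incidences `(u, e)` of `G`; as an edge of `S(G)` with endpoints of
degrees `d(u)` and `2`, such an incidence has degree `d(u) + 2 - 2 = d(u)` in the line graph.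
Hence `N = ∑ᵤ d(u) = 2m` and `F̄(PL(G)) = ∑ᵤ d(u) (2m - 1 - d(u)) d(u)²`.
-/

section Degrees

variable {W : Type*} [Fintype W]

theorem edgeSum_add_eq_sum_degree_mul_s15 (H : SimpleGraph W) (g : W → ℤ) :
    edgeSum H (fun a b => g a + g b) (fun _ _ => add_comm _ _)
      = ∑ v, (H.degree v : ℤ) * g v := by
  have dart_sum_eq_edgeSum : ∑ x : H.Dart, g x.fst
      = edgeSum H (fun a b => g a + g b) (fun _ _ => add_comm _ _) := by
    rw [← Finset.sum_fiberwise_of_maps_to (t := H.edgeFinset) (g := Dart.edge)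
      fun x _ => H.mem_edgeFinset.2 x.edge_mem]
    refine Finset.sum_congr rfl fun e he => ?_
    induction e using Sym2.ind with
    | _ a b =>
      let x : H.Dart := ⟨(a, b), H.mem_edgeFinset.1 he⟩
      rw [show ({y ∈ univ | y.edge = s(a, b)} : Finset H.Dart) = {x, x.symm} from x.edge_fiber,
        Finset.sum_pair x.symm_ne.symm]
      rfl
  rw [← dart_sum_eq_edgeSum,
    ← Finset.sum_fiberwise_of_maps_to (t := univ) (g := fun x : H.Dart => x.fst)
      fun _ _ => mem_univ _]
  refine Finset.sum_congr rfl fun v _ => ?_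
  rw [Finset.sum_congr rfl fun x hx => congrArg g (Finset.mem_filter.1 hx).2, Finset.sum_const,
    H.dart_fst_fiber_card_eq_degree, nsmul_eq_mul]

theorem natCast_degree_compl (H : SimpleGraph W) (v : W) [Fintype (Hᶜ.neighborSet v)] :
    (Hᶜ.degree v : ℤ) = Fintype.card W - 1 - H.degree v := by
  have := H.degree_lt_card_verts v
  rw [degree_compl]
  omega

theorem Fbar_eq_sum (H : SimpleGraph W) :
    Fbar H = ∑ v, ((Fintype.card W : ℤ) - 1 - d H v) * d H v ^ 2 := by
  refine (edgeSum_add_eq_sum_degree_mul_s15 Hᶜ fun v => d H v ^ 2).trans ?_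
  exact Finset.sum_congr rfl fun v _ => by rw [natCast_degree_compl]; rfl

theorem lineGraph_degree_add_two_s15 (H : SimpleGraph W) {a b : W} (hab : H.Adj a b) :
    H.lineGraph.degree ⟨s(a, b), hab⟩ + 2 = H.degree a + H.degree b := by
  have neighbors_eq :
      (H.lineGraph.neighborFinset ⟨s(a, b), hab⟩).map (Function.Embedding.subtype _)
        = (H.incidenceFinset a ∪ H.incidenceFinset b).erase s(a, b) := by
    ext f
    simp only [mem_map, mem_neighborFinset, lineGraph_adj_iff_exists,
      Function.Embedding.coe_subtype, mem_erase, mem_union, mem_incidenceFinset, incidenceSet,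
      Set.mem_ofPred_eq]
    constructor
    · rintro ⟨f, ⟨hne, v, hv, hvf⟩, rfl⟩
      refine ⟨fun h => hne (Subtype.ext h.symm), ?_⟩
      rcases Sym2.mem_iff.1 hv with rfl | rfl
      exacts [Or.inl ⟨f.2, hvf⟩, Or.inr ⟨f.2, hvf⟩]
    · rintro ⟨hne, ⟨hf, hv⟩ | ⟨hf, hv⟩⟩ <;>
        exact ⟨⟨f, hf⟩, ⟨fun h => hne (congrArg Subtype.val h).symm, _, by simp, hv⟩, rfl⟩
  have inter_eq : H.incidenceFinset a ∩ H.incidenceFinset b = {s(a, b)} := by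
    rw [← coe_inj]; push_cast
    simpa using H.incidenceSet_inter_incidenceSet_of_adj hab
  have mem_union : s(a, b) ∈ H.incidenceFinset a ∪ H.incidenceFinset b :=
    mem_union_left _ (H.mem_incidenceFinset _ _ |>.2 (H.mk'_mem_incidenceSet_left_iff.2 hab))
  have := card_union_add_card_inter (H.incidenceFinset a) (H.incidenceFinset b)
  rw [inter_eq, card_singleton, card_incidenceFinset_eq_degree, card_incidenceFinset_eq_degree,
    ← card_erase_add_one mem_union, ← neighbors_eq, card_map,
    card_neighborFinset_eq_degree] at this
  omega

end Degrees

@[simp] theorem subdivision_adj_inl_inr {V : Type*} {G : SimpleGraph V} {u : V} {e : G.edgeSet} :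
    (subdivision G).Adj (.inl u) (.inr e) ↔ u ∈ (e : Sym2 V) := Iff.rfl

@[simp] theorem subdivision_adj_inr_inl {V : Type*} {G : SimpleGraph V} {u : V} {e : G.edgeSet} :
    (subdivision G).Adj (.inr e) (.inl u) ↔ u ∈ (e : Sym2 V) := Iff.rfl

@[simp] theorem not_subdivision_adj_inl_inl {V : Type*} {G : SimpleGraph V} {u v : V} :
    ¬(subdivision G).Adj (.inl u) (.inl v) := id

@[simp] theorem not_subdivision_adj_inr_inr {V : Type*} {G : SimpleGraph V} {e f : G.edgeSet} :
    ¬(subdivision G).Adj (.inr e) (.inr f) := id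

section Subdivision

variable {G : SimpleGraph V}

theorem subdivision_degree_inl (u : V) : (subdivision G).degree (.inl u) = G.degree u := by
  rw [← card_neighborSet_eq_degree, ← card_incidenceSet_eq_degree]
  refine Fintype.card_congr
    { toFun := fun
        | ⟨.inl _, h⟩ => False.elim h
        | ⟨.inr e, h⟩ => ⟨e, e.2, h⟩
      invFun := fun e => ⟨.inr ⟨e, e.2.1⟩, e.2.2⟩
      left_inv := by rintro ⟨_ | _, h⟩; exacts [False.elim h, rfl]
      right_inv := fun _ => rfl }

theorem subdivision_degree_inr (e : G.edgeSet) : (subdivision G).degree (.inr e) = 2 := by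
  obtain ⟨e, he⟩ := e
  induction e using Sym2.ind with
  | _ a b =>
    have : (subdivision G).neighborFinset (.inr ⟨s(a, b), he⟩) = {.inl a, .inl b} := by
      ext (u | f) <;> simp
    rw [← card_neighborFinset_eq_degree, this, card_pair (by simpa using G.ne_of_adj he)]

theorem paraline_degree {u : V} {e : G.edgeSet} (h : (subdivision G).Adj (.inl u) (.inr e)) :
    (paraline G).degree ⟨s(.inl u, .inr e), h⟩ = G.degree u := by
  have := lineGraph_degree_add_two_s15 (subdivision G) h
  rw [subdivision_degree_inl, subdivision_degree_inr] at this
  exact Nat.add_right_cancel this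

theorem sum_paraline_degree (φ : ℕ → ℤ) :
    ∑ x : (subdivision G).edgeSet, φ ((paraline G).degree x)
      = ∑ u, (G.degree u : ℤ) * φ (G.degree u) := by
  -- Each edge of `subdivision G` has exactly one endpoint in `V`, so an edge sum of `g a + g b`
  -- with `g` vanishing on `G.edgeSet` charges every edge to that endpoint.
  let g : V ⊕ G.edgeSet → ℤ := Sum.elim (fun u => φ (G.degree u)) 0
  have term_eq (x : (subdivision G).edgeSet) :
      φ ((paraline G).degree x)
        = Sym2.lift ⟨fun a b => g a + g b, fun _ _ => add_comm _ _⟩ x := by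
    obtain ⟨x, hx⟩ := x
    induction x using Sym2.ind with
    | _ a b =>
      rcases a with u | e <;> rcases b with v | f
      · exact absurd ((subdivision G).mem_edgeSet.1 hx) not_subdivision_adj_inl_inl
      · show φ _ = φ (G.degree u) + 0
        rw [paraline_degree hx, add_zero]
      · have hx' := ((subdivision G).mem_edgeSet.1 hx).symm
        rw [show (⟨s(.inr e, .inl v), hx⟩ : (subdivision G).edgeSet)
            = ⟨s(.inl v, .inr e), hx'⟩ from Subtype.ext Sym2.eq_swap]
        show φ _ = φ (G.degree v) + 0
        rw [paraline_degree hx', add_zero]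
      · exact absurd ((subdivision G).mem_edgeSet.1 hx) not_subdivision_adj_inr_inr
  calc ∑ x : (subdivision G).edgeSet, φ ((paraline G).degree x)
      = edgeSum (subdivision G) (fun a b => g a + g b) (fun _ _ => add_comm _ _) := by
        rw [edgeSum, Finset.sum_subtype _ fun _ => mem_edgeFinset]
        exact Finset.sum_congr rfl fun x _ => term_eq x
    _ = ∑ y, ((subdivision G).degree y : ℤ) * g y := edgeSum_add_eq_sum_degree_mul_s15 _ g
    _ = ∑ u, (G.degree u : ℤ) * φ (G.degree u) := by
        simp [Fintype.sum_sum_type, g, subdivision_degree_inl]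

end Subdivision

theorem stmt15_general {V : Type*} [Fintype V] (G : SimpleGraph V) :
    Fbar (paraline G) = (2 * m G - 1) * F G - xi4 G := by
  have card_paraline : (Fintype.card (subdivision G).edgeSet : ℤ) = 2 * m G := by
    have := sum_paraline_degree (G := G) fun _ => 1
    simp only [mul_one, Finset.sum_const, Finset.card_univ, nsmul_eq_mul] at this
    rw [this, m, ← Nat.cast_sum, G.sum_degrees_eq_twice_card_edges]
    push_cast; ring
  rw [Fbar_eq_sum, card_paraline]
  simp only [d]
  rw [sum_paraline_degree fun k => (2 * m G - 1 - k) * (k : ℤ) ^ 2, F, xi4, Finset.mul_sum,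
    ← Finset.sum_sub_distrib]
  refine Finset.sum_congr rfl fun u _ => ?_
  simp only [d]
  ring

theorem stmt15 {V : Type*} [Fintype V] (G : SimpleGraph V) (hm : 1 ≤ m G) :
    Fbar (paraline G) = (2 * m G - 1) * F G - xi4 G :=
  stmt15_general G

end Paper
end
end
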